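/- Assume the dual-weighted-residual identity J* − J_N* = (1/2)·( m(e_y^0, e_p^0) − τ·∑_{k=1}^{K} r_y^k(e_p^k) − τ·∑_{k=1}^{K} r_p^k(e_y^k) ) holds, where e_p^0 = e_p^1. Assume moreover the energy bounds m(e_p^1, e_p^1) + τ·∑_{k=1}^{K} a(e_p^k, e_p^k) ≤ (Δ_p*)² and m(e_y^K, e_y^K) + τ·∑_{k=1}^{K} a(e_y^k, e_y^k) ≤ (Δ_y*)², with Δ_p*, Δ_y* ≥ 0. Then |J* − J_N*| ≤ (1/2)·( (m(e_y^0, e_y^0)^{1/2} + Δ_N^{y,K})·Δ_p* + Δ_N^{p,1}·Δ_y* ), where Δ_N^{y,K} = ((τ/α)·∑_{k=1}^{K} ‖r_y^k‖_{Y'}²)^{1/2} and Δ_N^{p,1} = ((τ/α)·∑_{k=1}^{K} ‖r_p^k‖_{Y'}²)^{1/2}. -/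

import Mathlib

private lemma bilin_cs {Y : Type*} [AddCommGroup Y] [Module ℝ Y]
    (mm : Y →ₗ[ℝ] Y →ₗ[ℝ] ℝ) (hmsymm : ∀ v w : Y, mm v w = mm w v)
    (hmpos : ∀ v : Y, 0 ≤ mm v v) (v w : Y) :
    |mm v w| ≤ Real.sqrt (mm v v) * Real.sqrt (mm w w) := by
  have hq : ∀ t : ℝ, 0 ≤ mm w w * (t * t) + (2 * mm v w) * t + mm v v := by
    intro t
    have := hmpos (v + t • w)
    have hsym := hmsymm w v
    simp only [map_add, map_smul, LinearMap.add_apply, LinearMap.smul_apply,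
      smul_eq_mul] at this
    rw [hsym] at this
    nlinarith [this]
  have hd := discrim_le_zero hq
  rw [discrim] at hd
  have h1 : (mm v w) ^ 2 ≤ mm v v * mm w w := by nlinarith
  calc |mm v w| = Real.sqrt ((mm v w) ^ 2) := by
        rw [Real.sqrt_sq_eq_abs]
    _ ≤ Real.sqrt (mm v v * mm w w) := Real.sqrt_le_sqrt h1
    _ = Real.sqrt (mm v v) * Real.sqrt (mm w w) := Real.sqrt_mul (hmpos v) _

private lemma residual_bound {Y : Type*} [NormedAddCommGroup Y] [NormedSpace ℝ Y]
    {K : ℕ} {τ α : ℝ} (hτ : 0 < τ) (hα : 0 < α)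
    (a : Y →ₗ[ℝ] Y →ₗ[ℝ] ℝ) (ha : ∀ v : Y, α * ‖v‖ ^ 2 ≤ a v v)
    (e : ℕ → Y) (r : ℕ → Y →L[ℝ] ℝ) (Δ : ℝ) (hΔ : 0 ≤ Δ)
    (hE : τ * ∑ k ∈ Finset.Icc 1 K, a (e k) (e k) ≤ Δ ^ 2) :
    τ * |∑ k ∈ Finset.Icc 1 K, r k (e k)| ≤
      Real.sqrt ((τ / α) * ∑ k ∈ Finset.Icc 1 K, ‖r k‖ ^ 2) * Δ := by
  have h1 : |∑ k ∈ Finset.Icc 1 K, r k (e k)| ≤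
      Real.sqrt (∑ k ∈ Finset.Icc 1 K, ‖r k‖ ^ 2) *
      Real.sqrt (∑ k ∈ Finset.Icc 1 K, ‖e k‖ ^ 2) := by
    calc |∑ k ∈ Finset.Icc 1 K, r k (e k)|
        ≤ ∑ k ∈ Finset.Icc 1 K, |r k (e k)| := Finset.abs_sum_le_sum_abs _ _
      _ ≤ ∑ k ∈ Finset.Icc 1 K, ‖r k‖ * ‖e k‖ := by
          refine Finset.sum_le_sum fun k _ => ?_
          exact (r k).le_opNorm (e k)
      _ ≤ _ := Real.sum_mul_le_sqrt_mul_sqrt _ _ _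
  have h2 : Real.sqrt (τ * α * ∑ k ∈ Finset.Icc 1 K, ‖e k‖ ^ 2) ≤ Δ := by
    have hle : τ * α * ∑ k ∈ Finset.Icc 1 K, ‖e k‖ ^ 2 ≤ Δ ^ 2 := by
      have : α * ∑ k ∈ Finset.Icc 1 K, ‖e k‖ ^ 2 ≤
          ∑ k ∈ Finset.Icc 1 K, a (e k) (e k) := by
        rw [Finset.mul_sum]
        exact Finset.sum_le_sum fun k _ => ha (e k)
      nlinarith
    calc Real.sqrt (τ * α * ∑ k ∈ Finset.Icc 1 K, ‖e k‖ ^ 2)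
        ≤ Real.sqrt (Δ ^ 2) := Real.sqrt_le_sqrt hle
      _ = Δ := by rw [Real.sqrt_sq hΔ]
  have hsum_nonneg : 0 ≤ ∑ k ∈ Finset.Icc 1 K, ‖e k‖ ^ 2 :=
    Finset.sum_nonneg fun k _ => by positivity
  have hτeq : τ = Real.sqrt (τ / α) * Real.sqrt (τ * α) := by
    rw [← Real.sqrt_mul (by positivity)]
    rw [show τ / α * (τ * α) = τ ^ 2 by field_simp]
    rw [Real.sqrt_sq hτ.le]
  calc τ * |∑ k ∈ Finset.Icc 1 K, r k (e k)|
      ≤ τ * (Real.sqrt (∑ k ∈ Finset.Icc 1 K, ‖r k‖ ^ 2) *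
        Real.sqrt (∑ k ∈ Finset.Icc 1 K, ‖e k‖ ^ 2)) := by
        exact mul_le_mul_of_nonneg_left h1 hτ.le
    _ = Real.sqrt ((τ / α) * ∑ k ∈ Finset.Icc 1 K, ‖r k‖ ^ 2) *
        Real.sqrt (τ * α * ∑ k ∈ Finset.Icc 1 K, ‖e k‖ ^ 2) := by
        rw [Real.sqrt_mul (by positivity), Real.sqrt_mul (by positivity)]
        conv_lhs => rw [hτeq]
        ring
    _ ≤ Real.sqrt ((τ / α) * ∑ k ∈ Finset.Icc 1 K, ‖r k‖ ^ 2) * Δ := by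
        exact mul_le_mul_of_nonneg_left h2 (Real.sqrt_nonneg _)

/-- A posteriori cost functional error bound in the unconstrained case:
`|J* − J_N*| ≤ Δ_N^{J,*,uc}`, derived from the dual-weighted-residual identity and
the energy bounds on the state and adjoint errors. -/
theorem cost_functional_error_bound_unconstrained
    {Y : Type*} [NormedAddCommGroup Y] [NormedSpace ℝ Y]
    {K : ℕ} (hK : 1 ≤ K) {τ α : ℝ} (hτ : 0 < τ) (hα : 0 < α)
    (a mm : Y →ₗ[ℝ] Y →ₗ[ℝ] ℝ)
    (ha : ∀ v : Y, α * ‖v‖ ^ 2 ≤ a v v)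
    (hmsymm : ∀ v w : Y, mm v w = mm w v)
    (hmpos : ∀ v : Y, 0 ≤ mm v v)
    (ey ep : ℕ → Y)
    (ry rp : ℕ → Y →L[ℝ] ℝ)
    (Jstar JNstar Δp Δy : ℝ)
    (hΔp : 0 ≤ Δp) (hΔy : 0 ≤ Δy)
    (hdwr : Jstar - JNstar = (1 / 2) * (mm (ey 0) (ep 1)
      - τ * ∑ k ∈ Finset.Icc 1 K, ry k (ep k)
      - τ * ∑ k ∈ Finset.Icc 1 K, rp k (ey k)))
    (hEp : mm (ep 1) (ep 1) + τ * ∑ k ∈ Finset.Icc 1 K, a (ep k) (ep k) ≤ Δp ^ 2)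
    (hEy : mm (ey K) (ey K) + τ * ∑ k ∈ Finset.Icc 1 K, a (ey k) (ey k) ≤ Δy ^ 2) :
    |Jstar - JNstar| ≤ (1 / 2) *
      ((Real.sqrt (mm (ey 0) (ey 0))
          + Real.sqrt ((τ / α) * ∑ k ∈ Finset.Icc 1 K, ‖ry k‖ ^ 2)) * Δp
        + Real.sqrt ((τ / α) * ∑ k ∈ Finset.Icc 1 K, ‖rp k‖ ^ 2) * Δy) := by
  have hanonneg : ∀ v : Y, (0:ℝ) ≤ a v v := fun v =>
    le_trans (by positivity) (ha v)
  have hsum_a_p : 0 ≤ τ * ∑ k ∈ Finset.Icc 1 K, a (ep k) (ep k) := by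
    apply mul_nonneg hτ.le
    exact Finset.sum_nonneg fun k _ => hanonneg _
  have hsum_a_y : 0 ≤ τ * ∑ k ∈ Finset.Icc 1 K, a (ey k) (ey k) := by
    apply mul_nonneg hτ.le
    exact Finset.sum_nonneg fun k _ => hanonneg _
  -- first term
  have hmp : Real.sqrt (mm (ep 1) (ep 1)) ≤ Δp := by
    have : mm (ep 1) (ep 1) ≤ Δp ^ 2 := by linarith
    calc Real.sqrt (mm (ep 1) (ep 1)) ≤ Real.sqrt (Δp ^ 2) := Real.sqrt_le_sqrt this
      _ = Δp := Real.sqrt_sq hΔp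
  have h1 : |mm (ey 0) (ep 1)| ≤ Real.sqrt (mm (ey 0) (ey 0)) * Δp := by
    calc |mm (ey 0) (ep 1)| ≤ Real.sqrt (mm (ey 0) (ey 0)) * Real.sqrt (mm (ep 1) (ep 1)) :=
          bilin_cs mm hmsymm hmpos _ _
      _ ≤ Real.sqrt (mm (ey 0) (ey 0)) * Δp :=
          mul_le_mul_of_nonneg_left hmp (Real.sqrt_nonneg _)
  have h2 : τ * |∑ k ∈ Finset.Icc 1 K, ry k (ep k)| ≤
      Real.sqrt ((τ / α) * ∑ k ∈ Finset.Icc 1 K, ‖ry k‖ ^ 2) * Δp :=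
    residual_bound hτ hα a ha ep ry Δp hΔp (by linarith [hmpos (ep 1)])
  have h3 : τ * |∑ k ∈ Finset.Icc 1 K, rp k (ey k)| ≤
      Real.sqrt ((τ / α) * ∑ k ∈ Finset.Icc 1 K, ‖rp k‖ ^ 2) * Δy :=
    residual_bound hτ hα a ha ey rp Δy hΔy (by linarith [hmpos (ey K)])
  rw [hdwr, abs_mul, abs_of_pos (by norm_num : (0:ℝ) < 1/2)]
  have habs : |mm (ey 0) (ep 1) - τ * ∑ k ∈ Finset.Icc 1 K, ry k (ep k)
      - τ * ∑ k ∈ Finset.Icc 1 K, rp k (ey k)| ≤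
      |mm (ey 0) (ep 1)| + τ * |∑ k ∈ Finset.Icc 1 K, ry k (ep k)|
      + τ * |∑ k ∈ Finset.Icc 1 K, rp k (ey k)| := by
    have := abs_sub (mm (ey 0) (ep 1) - τ * ∑ k ∈ Finset.Icc 1 K, ry k (ep k))
      (τ * ∑ k ∈ Finset.Icc 1 K, rp k (ey k))
    have h4 := abs_sub (mm (ey 0) (ep 1)) (τ * ∑ k ∈ Finset.Icc 1 K, ry k (ep k))
    rw [abs_mul, abs_of_pos hτ] at this h4
    linarith
  have : |mm (ey 0) (ep 1) - τ * ∑ k ∈ Finset.Icc 1 K, ry k (ep k)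
      - τ * ∑ k ∈ Finset.Icc 1 K, rp k (ey k)| ≤
      (Real.sqrt (mm (ey 0) (ey 0))
          + Real.sqrt ((τ / α) * ∑ k ∈ Finset.Icc 1 K, ‖ry k‖ ^ 2)) * Δp
        + Real.sqrt ((τ / α) * ∑ k ∈ Finset.Icc 1 K, ‖rp k‖ ^ 2) * Δy := by
    nlinarith [habs]
  linarith [mul_le_mul_of_nonneg_left this (by norm_num : (0:ℝ) ≤ 1/2)]
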